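/- arXiv:2401.09723 — 3 statements merged into one kernel-verified Lean document; each statement's English description precedes it below -/
import Mathlib

section
/- Let P be a finite poset with n elements, Q a finite poset with n' elements, and x a minimal element of P. Define the hybrid sum R = Q <_x P on the disjoint union of P and Q, where the orders on P and Q are retained and every element of Q is below every element of P except x (and x is incomparable to all of Q). Then e(R) = e(Q)·e(P) + n'·e(Q)·e(P−x). -/
/-- The number of linear extensions of the finite poset `(α, O)`. -/
noncomputable def eCount (α : Type) [Fintype α] (O : PartialOrder α) : ℕ :=
  Nat.card {f : α ≃ Fin (Fintype.card α) // ∀ a b : α, O.le a b → f a ≤ f b}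

/-- The induced order on `P − x`. -/
def delOrder {α : Type} (O : PartialOrder α) (x : α) : PartialOrder {a : α // a ≠ x} where
  le a b := O.le a.1 b.1
  lt a b := O.le a.1 b.1 ∧ ¬ O.le b.1 a.1
  lt_iff_le_not_ge := fun _ _ => Iff.rfl
  le_refl a := O.le_refl a.1
  le_trans a b c := O.le_trans a.1 b.1 c.1
  le_antisymm a b h h' := Subtype.ext (O.le_antisymm a.1 b.1 h h')

/-- The number of linear extensions of `P − x`. -/
noncomputable def eDel (α : Type) [Fintype α] [DecidableEq α] (O : PartialOrder α) (x : α) : ℕ :=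
  eCount {a : α // a ≠ x} (delOrder O x)

/-- `x` is a minimal element of the poset `(α, O)`. -/
def isMinimal {α : Type} (O : PartialOrder α) (x : α) : Prop :=
  ∀ a : α, O.le a x → a = x

/-- The width of a finite poset: the maximal size of an antichain. -/
noncomputable def pwidth (α : Type) [Fintype α] (O : PartialOrder α) : ℕ :=
  sSup {n : ℕ | ∃ s : Finset α,
    (∀ a ∈ s, ∀ b ∈ s, a ≠ b → ¬ O.le a b) ∧ s.card = n}

/-- The underlying relation of the linear (ordinal) sum `P <| Q`:
elements of `α` are below all elements of `β`. -/
def linLE {α β : Type} (O : PartialOrder α) (O' : PartialOrder β) :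
    α ⊕ β → α ⊕ β → Prop
  | .inl a, .inl a' => O.le a a'
  | .inr b, .inr b' => O'.le b b'
  | .inl _, .inr _ => True
  | .inr _, .inl _ => False

/-- The linear (ordinal) sum `P <| Q`. -/
def linOrder {α β : Type} (O : PartialOrder α) (O' : PartialOrder β) :
    PartialOrder (α ⊕ β) where
  le := linLE O O'
  lt a b := linLE O O' a b ∧ ¬ linLE O O' b a
  lt_iff_le_not_ge := fun _ _ => Iff.rfl
  le_refl := by
    rintro (a | b)
    · exact O.le_refl a
    · exact O'.le_refl b
  le_trans := by
    rintro (a | a) (b | b) (c | c) h h' <;>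
      first
        | exact h.elim
        | exact h'.elim
        | trivial
        | exact O.le_trans _ _ _ h h'
        | exact O'.le_trans _ _ _ h h'
  le_antisymm := by
    rintro (a | a) (b | b) h h' <;>
      first
        | exact h.elim
        | exact h'.elim
        | exact congrArg Sum.inl (O.le_antisymm _ _ h h')
        | exact congrArg Sum.inr (O'.le_antisymm _ _ h h')

/-- The relation of the parallel (disjoint) sum `P ⊕ Q`. -/
def parLE {α β : Type} (O : PartialOrder α) (O' : PartialOrder β) :
    α ⊕ β → α ⊕ β → Prop
  | .inl a, .inl a' => O.le a a'
  | .inr b, .inr b' => O'.le b b'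
  | .inl _, .inr _ => False
  | .inr _, .inl _ => False

/-- The parallel (disjoint) sum `P ⊕ Q`. -/
def parOrder {α β : Type} (O : PartialOrder α) (O' : PartialOrder β) :
    PartialOrder (α ⊕ β) where
  le := parLE O O'
  lt a b := parLE O O' a b ∧ ¬ parLE O O' b a
  lt_iff_le_not_ge := fun _ _ => Iff.rfl
  le_refl := by
    rintro (a | b)
    · exact O.le_refl a
    · exact O'.le_refl b
  le_trans := by
    rintro (a | a) (b | b) (c | c) h h' <;>
      first
        | exact h.elim
        | exact h'.elim
        | exact O.le_trans _ _ _ h h'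
        | exact O'.le_trans _ _ _ h h'
  le_antisymm := by
    rintro (a | a) (b | b) h h' <;>
      first
        | exact h.elim
        | exact h'.elim
        | exact congrArg Sum.inl (O.le_antisymm _ _ h h')
        | exact congrArg Sum.inr (O'.le_antisymm _ _ h h')

/-- The dual order. -/
def dualOrder {α : Type} (O : PartialOrder α) : PartialOrder α where
  le a b := O.le b a
  lt a b := O.le b a ∧ ¬ O.le a b
  lt_iff_le_not_ge := fun _ _ => Iff.rfl
  le_refl a := O.le_refl a
  le_trans a b c h h' := O.le_trans c b a h' h
  le_antisymm a b h h' := O.le_antisymm a b h' h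

/-- The relation of the hybrid sum `Q <_x P`, where `P` lives on `α` (the `inl`
component), `Q` lives on `β` (the `inr` component), and `x : α` is a (minimal)
element of `P`: every element of `Q` is below every element of `P` except `x`,
and `x` is incomparable to all of `Q`.  (For `x` minimal, `¬ a ≤ x ↔ a ≠ x`.) -/
def hybLE {α β : Type} (O : PartialOrder α) (O' : PartialOrder β) (x : α) :
    α ⊕ β → α ⊕ β → Prop
  | .inl a, .inl a' => O.le a a'
  | .inr b, .inr b' => O'.le b b'
  | .inr _, .inl a => ¬ O.le a x
  | .inl _, .inr _ => False

/-- The hybrid sum `Q <_x P`. -/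
def hybOrder {α β : Type} (O : PartialOrder α) (O' : PartialOrder β) (x : α) :
    PartialOrder (α ⊕ β) where
  le := hybLE O O' x
  lt a b := hybLE O O' x a b ∧ ¬ hybLE O O' x b a
  lt_iff_le_not_ge := fun _ _ => Iff.rfl
  le_refl := by
    rintro (a | b)
    · exact O.le_refl a
    · exact O'.le_refl b
  le_trans := by
    rintro (a | a) (b | b) (c | c) h h' <;>
      first
        | exact h.elim
        | exact h'.elim
        | exact h'
        | exact O.le_trans _ _ _ h h'
        | exact O'.le_trans _ _ _ h h'
        | exact fun hc => h (O.le_trans _ _ _ h' hc)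
  le_antisymm := by
    rintro (a | a) (b | b) h h' <;>
      first
        | exact h.elim
        | exact h'.elim
        | exact congrArg Sum.inl (O.le_antisymm _ _ h h')
        | exact congrArg Sum.inr (O'.le_antisymm _ _ h h')

/-- The carrier of the flip-flop poset built from `P` on `α` (with `x` removed),
`Q` on `β` (with `y` removed), and the two extra elements `z = Sum.inr false`
and `v = Sum.inr true`. -/
abbrev FlipCarrier (α β : Type) (x : α) (y : β) : Type :=
  ({a : α // a ≠ x} ⊕ {b : β // b ≠ y}) ⊕ Bool

/-- The relation of the flip-flop poset: the dual order on `P − x`, the order on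
`Q − y`; `p ≺ z` for `p` with `x ≺ p` in `P`; `z ≺ q` for `q` with `y ≺ q` in `Q`;
`p ≺ v ≺ q` for all `p ∈ P − x`, `q ∈ Q − y`; and `z, v` incomparable. -/
def ffLE {α β : Type} (O : PartialOrder α) (O' : PartialOrder β) (x : α) (y : β) :
    FlipCarrier α β x y → FlipCarrier α β x y → Prop
  | .inl (.inl p), .inl (.inl p') => O.le p'.1 p.1
  | .inl (.inr q), .inl (.inr q') => O'.le q.1 q'.1
  | .inl (.inl _), .inl (.inr _) => True
  | .inl (.inr _), .inl (.inl _) => False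
  | .inl (.inl _), .inr true => True
  | .inl (.inl p), .inr false => O.le x p.1
  | .inr true, .inl (.inr _) => True
  | .inr false, .inl (.inr q) => O'.le y q.1
  | .inl (.inr _), .inr _ => False
  | .inr _, .inl (.inl _) => False
  | .inr c, .inr c' => c = c'

/-- The flip-flop poset. -/
def ffOrder {α β : Type} (O : PartialOrder α) (O' : PartialOrder β) (x : α) (y : β) :
    PartialOrder (FlipCarrier α β x y) where
  le := ffLE O O' x y
  lt a b := ffLE O O' x y a b ∧ ¬ ffLE O O' x y b a
  lt_iff_le_not_ge := fun _ _ => Iff.rfl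
  le_refl := by
    rintro ((p | q) | (_ | _)) <;>
      first
        | exact O.le_refl _
        | exact O'.le_refl _
        | rfl
  le_trans := by
    rintro ((p | q) | (_ | _)) ((p' | q') | (_ | _)) ((p'' | q'') | (_ | _)) h h' <;>
      first
        | trivial
        | exact h.elim
        | exact h'.elim
        | exact O.le_trans _ _ _ h' h
        | exact O'.le_trans _ _ _ h h'
        | exact O.le_trans _ _ _ h h'
        | exact O'.le_trans _ _ _ h' h
        | simp_all
  le_antisymm := by
    rintro ((p | q) | (_ | _)) ((p' | q') | (_ | _)) h h' <;>
      first
        | exact h.elim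
        | exact h'.elim
        | rfl
        | exact congrArg (fun t => Sum.inl (Sum.inl t)) (Subtype.ext (O.le_antisymm _ _ h' h))
        | exact congrArg (fun t => Sum.inl (Sum.inr t)) (Subtype.ext (O'.le_antisymm _ _ h h'))
        | exact Bool.noConfusion h
        | simp_all

/-- The value of the simple continued fraction `[b₀; b₁, …, b_m]`. -/
def cfVal : List ℕ → ℚ
  | [] => 0
  | [b] => (b : ℚ)
  | b :: l => (b : ℚ) + (cfVal l)⁻¹

/-- `l = [b₀, b₁, …, b_m]` is an admissible simple continued fraction expansion:
nonempty, `b₁, …, b_m ≥ 1`, and the last quotient is `≥ 2` when `m ≥ 1`.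
(Such an expansion exists and is unique for every nonnegative rational.) -/
def cfAdmissible (l : List ℕ) : Prop :=
  l ≠ [] ∧ (∀ i : Fin l.length, 0 < i.1 → 1 ≤ l.get i) ∧
    (2 ≤ l.length → ∀ b ∈ l.getLast?, 2 ≤ b)

/-- `gcfAux a b m k` is the value of the tail
`[a_{i+1}, …, a_m ; b_i, …, b_m]` of the generalized continued fraction, where
`i = m - k`; thus `gcfAux a b m m = b₀ + a₁/(b₁ + a₂/(b₂ + ⋯ + a_m/b_m))`. -/
def gcfAux (a b : ℕ → ℕ) (m : ℕ) : ℕ → ℚ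
  | 0 => (b m : ℚ)
  | k + 1 => (b (m - (k + 1)) : ℚ) + (a (m - k) : ℚ) / gcfAux a b m k

/-- The numerators `C_i` of the generalized continued fraction, indexed so that
`gcfC a b m k = C_{m-k}`: they satisfy `C_m = b_m`, `D_m = 1`, `D_i = C_{i+1}`,
`C_i = b_i D_i + a_{i+1} D_{i+1}`. -/
def gcfC (a b : ℕ → ℕ) (m : ℕ) : ℕ → ℕ
  | 0 => b m
  | 1 => b (m - 1) * b m + a m
  | k + 2 => b (m - (k + 2)) * gcfC a b m (k + 1) + a (m - (k + 1)) * gcfC a b m k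

/-- The denominators `D_i`, indexed so that `gcfD a b m k = D_{m-k}`. -/
def gcfD (a b : ℕ → ℕ) (m : ℕ) : ℕ → ℕ
  | 0 => 1
  | k + 1 => gcfC a b m k


namespace LHS

lemma fin_card_le_of_lt {γ : Type} [Fintype γ] {N c : ℕ} (F : γ → Fin N)
    (hinj : Function.Injective F) (hlt : ∀ u, (F u).val < c) : Fintype.card γ ≤ c := by
  have h : Fintype.card γ ≤ Fintype.card (Fin c) := by
    refine Fintype.card_le_of_injective (fun u => ⟨(F u).val, hlt u⟩) ?_
    intro u v huv
    have h1 : (F u).val = (F v).val := by simpa using huv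
    exact hinj (Fin.ext h1)
  simpa using h

lemma fin_card_le_of_ge {γ : Type} [Fintype γ] {N c : ℕ} (F : γ → Fin N)
    (hinj : Function.Injective F) (hge : ∀ u, c ≤ (F u).val) :
    Fintype.card γ ≤ N - c := by
  have h : Fintype.card γ ≤ Fintype.card (Fin (N - c)) := by
    refine Fintype.card_le_of_injective
      (fun u => ⟨(F u).val - c, by have := (F u).isLt; have := hge u; omega⟩) ?_
    intro u v huv
    have h1 : (F u).val - c = (F v).val - c := by simpa using huv
    have := hge u; have := hge v
    exact hinj (Fin.ext (by omega))
  simpa using h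

lemma succAbove_val {n : ℕ} (p : Fin (n + 1)) (j : Fin n) :
    (p.succAbove j).val = if j.val < p.val then j.val else j.val + 1 := by
  rcases lt_or_ge j.castSucc p with h | h
  · rw [Fin.succAbove_of_castSucc_lt _ _ h]
    have : j.val < p.val := h
    simp [this]
  · rw [Fin.succAbove_of_le_castSucc _ _ h]
    have : p.val ≤ j.val := h
    have : ¬ j.val < p.val := by omega
    simp [this]

def xSplit {α : Type} [DecidableEq α] (x : α) : α ≃ PUnit.{1} ⊕ {a : α // a ≠ x} where
  toFun a := if h : a = x then .inl PUnit.unit else .inr ⟨a, h⟩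
  invFun s := match s with | .inl _ => x | .inr t => t.1
  left_inv a := by by_cases h : a = x <;> simp [h]
  right_inv s := by
    rcases s with _ | t
    · simp
    · simp [t.2]

lemma card_del {α : Type} [Fintype α] [DecidableEq α] (x : α) :
    Fintype.card {a : α // a ≠ x} + 1 = Fintype.card α := by
  have h := Fintype.card_congr (xSplit x)
  rw [Fintype.card_sum, Fintype.card_punit] at h
  omega

variable {α β : Type} [Fintype α] [Fintype β] [DecidableEq α]

lemma cardN : Fintype.card β + Fintype.card α = Fintype.card (α ⊕ β) := by
  rw [Fintype.card_sum]; omega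

def base1 (g : β ≃ Fin (Fintype.card β)) (h : α ≃ Fin (Fintype.card α)) :
    α ⊕ β ≃ Fin (Fintype.card (α ⊕ β)) :=
  (Equiv.sumComm α β).trans ((Equiv.sumCongr g h).trans
    (finSumFinEquiv.trans (finCongr cardN)))

@[simp] lemma base1_inl (g : β ≃ Fin (Fintype.card β)) (h : α ≃ Fin (Fintype.card α)) (a : α) :
    (base1 g h (Sum.inl a)).val = Fintype.card β + (h a).val := by
  simp [base1]

@[simp] lemma base1_inr (g : β ≃ Fin (Fintype.card β)) (h : α ≃ Fin (Fintype.card α)) (q : β) :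
    (base1 g h (Sum.inr q)).val = (g q).val := by
  simp [base1]

def blockQ (i : Fin (Fintype.card β)) (g : β ≃ Fin (Fintype.card β)) :
    β ⊕ PUnit.{1} ≃ Fin (Fintype.card β + 1) :=
  (Equiv.sumCongr g (Equiv.refl PUnit)).trans
    ((Equiv.optionEquivSumPUnit (Fin (Fintype.card β))).symm.trans
      (finSuccEquiv' i.castSucc).symm)

lemma cardN2 (x : α) :
    (Fintype.card β + 1) + Fintype.card {a : α // a ≠ x} = Fintype.card (α ⊕ β) := by
  have := card_del (α := α) x
  rw [Fintype.card_sum]; omega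

def base2 (x : α) (i : Fin (Fintype.card β)) (g : β ≃ Fin (Fintype.card β))
    (h : {a : α // a ≠ x} ≃ Fin (Fintype.card {a : α // a ≠ x})) :
    α ⊕ β ≃ Fin (Fintype.card (α ⊕ β)) :=
  (Equiv.sumCongr (xSplit x) (Equiv.refl β)).trans <|
    (Equiv.sumComm _ β).trans <|
      (Equiv.sumAssoc β PUnit.{1} {a : α // a ≠ x}).symm.trans <|
        (Equiv.sumCongr (blockQ i g) h).trans <|
          finSumFinEquiv.trans (finCongr (cardN2 x))

@[simp] lemma base2_inl_x (x : α) (i : Fin (Fintype.card β)) (g : β ≃ Fin (Fintype.card β))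
    (h : {a : α // a ≠ x} ≃ Fin (Fintype.card {a : α // a ≠ x})) :
    (base2 x i g h (Sum.inl x)).val = i.val := by
  simp [base2, blockQ, xSplit]

@[simp] lemma base2_inl_ne (x : α) (i : Fin (Fintype.card β)) (g : β ≃ Fin (Fintype.card β))
    (h : {a : α // a ≠ x} ≃ Fin (Fintype.card {a : α // a ≠ x})) (a : α) (ha : a ≠ x) :
    (base2 x i g h (Sum.inl a)).val = (Fintype.card β + 1) + (h ⟨a, ha⟩).val := by
  simp [base2, blockQ, xSplit, ha]

@[simp] lemma base2_inr (x : α) (i : Fin (Fintype.card β)) (g : β ≃ Fin (Fintype.card β))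
    (h : {a : α // a ≠ x} ≃ Fin (Fintype.card {a : α // a ≠ x})) (q : β) :
    (base2 x i g h (Sum.inr q)).val = (i.castSucc.succAbove (g q)).val := by
  simp [base2, blockQ, xSplit]

variable (O : PartialOrder α) (O' : PartialOrder β) (x : α)

/-- The bundled type of linear extensions. -/
def LinExt (γ : Type) [Fintype γ] (OO : PartialOrder γ) : Type :=
  {f : γ ≃ Fin (Fintype.card γ) // ∀ a b : γ, OO.le a b → f a ≤ f b}

instance instFiniteLinExt (γ : Type) [Fintype γ] (OO : PartialOrder γ) :
    Finite (LinExt γ OO) := by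
  unfold LinExt; infer_instance

lemma pres1 (g : LinExt β O') (h : LinExt α O) :
    ∀ u v, (hybOrder O O' x).le u v → base1 g.1 h.1 u ≤ base1 g.1 h.1 v := by
  rintro (a | q) (a' | q') huv
  · have h1 : O.le a a' := huv
    have h2 := h.2 a a' h1
    rw [Fin.le_def] at h2 ⊢
    rw [base1_inl, base1_inl]
    omega
  · exact huv.elim
  · rw [Fin.le_def, base1_inr, base1_inl]
    have := (g.1 q).isLt
    omega
  · have h2 := g.2 q q' huv
    rw [Fin.le_def] at h2 ⊢
    rw [base1_inr, base1_inr]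
    omega

lemma pres2 (hx : isMinimal O x) (i : Fin (Fintype.card β)) (g : LinExt β O')
    (h : LinExt {a : α // a ≠ x} (delOrder O x)) :
    ∀ u v, (hybOrder O O' x).le u v → base2 x i g.1 h.1 u ≤ base2 x i g.1 h.1 v := by
  rintro (a | q) (a' | q') huv
  · have h1 : O.le a a' := huv
    by_cases ha : a = x
    · by_cases ha' : a' = x
      · rw [ha, ha']
      · rw [ha, Fin.le_def, base2_inl_x, base2_inl_ne _ _ _ _ _ ha']
        have := i.isLt; omega
    · have ha' : a' ≠ x := fun e => ha (hx a (e ▸ h1))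
      have h2 := h.2 ⟨a, ha⟩ ⟨a', ha'⟩ h1
      rw [Fin.le_def] at h2 ⊢
      rw [base2_inl_ne _ _ _ _ _ ha, base2_inl_ne _ _ _ _ _ ha']
      omega
  · exact huv.elim
  · have ha' : a' ≠ x := fun e => huv (e ▸ O.le_refl x)
    rw [Fin.le_def, base2_inr, base2_inl_ne _ _ _ _ _ ha', succAbove_val]
    have := (g.1 q).isLt
    split <;> omega
  · have h2 := g.2 q q' huv
    rw [Fin.le_def] at h2 ⊢
    rw [base2_inr, base2_inr, succAbove_val, succAbove_val]
    split_ifs <;> omega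

def Phi (hx : isMinimal O x) :
    (LinExt β O' × LinExt α O) ⊕
      (Fin (Fintype.card β) × (LinExt β O' × LinExt {a : α // a ≠ x} (delOrder O x))) →
    LinExt (α ⊕ β) (hybOrder O O' x)
  | .inl (g, h) => ⟨base1 g.1 h.1, pres1 O O' x g h⟩
  | .inr (i, g, h) => ⟨base2 x i g.1 h.1, pres2 O O' x hx i g h⟩

lemma Phi_injective (hx : isMinimal O x) : Function.Injective (Phi O O' x hx) := by
  rintro (⟨g, h⟩ | ⟨i, g, h⟩) (⟨g', h'⟩ | ⟨i', g', h'⟩) heq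
  · have hfeq : base1 g.1 h.1 = base1 g'.1 h'.1 := congrArg Subtype.val heq
    have hg : g.1 = g'.1 := by
      apply Equiv.ext; intro q
      have h1 := congrArg (fun f : α ⊕ β ≃ Fin (Fintype.card (α ⊕ β)) =>
        (f (Sum.inr q)).val) hfeq
      simp only [base1_inr] at h1
      exact Fin.ext h1
    have hh : h.1 = h'.1 := by
      apply Equiv.ext; intro a
      have h1 := congrArg (fun f : α ⊕ β ≃ Fin (Fintype.card (α ⊕ β)) =>
        (f (Sum.inl a)).val) hfeq
      simp only [base1_inl] at h1
      exact Fin.ext (by omega)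
    simp only [Sum.inl.injEq, Prod.mk.injEq]
    exact ⟨Subtype.ext hg, Subtype.ext hh⟩
  · exfalso
    have hfeq : base1 g.1 h.1 = base2 x i' g'.1 h'.1 := congrArg Subtype.val heq
    have h1 := congrArg (fun f : α ⊕ β ≃ Fin (Fintype.card (α ⊕ β)) =>
      (f (Sum.inl x)).val) hfeq
    simp only [base1_inl, base2_inl_x] at h1
    have := i'.isLt; omega
  · exfalso
    have hfeq : base2 x i g.1 h.1 = base1 g'.1 h'.1 := congrArg Subtype.val heq
    have h1 := congrArg (fun f : α ⊕ β ≃ Fin (Fintype.card (α ⊕ β)) =>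
      (f (Sum.inl x)).val) hfeq
    simp only [base1_inl, base2_inl_x] at h1
    have := i.isLt; omega
  · have hfeq : base2 x i g.1 h.1 = base2 x i' g'.1 h'.1 := congrArg Subtype.val heq
    have hi : i = i' := by
      have h1 := congrArg (fun f : α ⊕ β ≃ Fin (Fintype.card (α ⊕ β)) =>
        (f (Sum.inl x)).val) hfeq
      simp only [base2_inl_x] at h1
      exact Fin.ext h1
    subst hi
    have hg : g.1 = g'.1 := by
      apply Equiv.ext; intro q
      have h1 := congrArg (fun f : α ⊕ β ≃ Fin (Fintype.card (α ⊕ β)) =>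
        (f (Sum.inr q)).val) hfeq
      simp only [base2_inr, succAbove_val] at h1
      have h2 := (g.1 q).isLt
      have h3 := (g'.1 q).isLt
      apply Fin.ext
      split_ifs at h1 <;> omega
    have hh : h.1 = h'.1 := by
      apply Equiv.ext; intro s
      have h1 := congrArg (fun f : α ⊕ β ≃ Fin (Fintype.card (α ⊕ β)) =>
        (f (Sum.inl s.1)).val) hfeq
      simp only [base2_inl_ne _ _ _ _ _ s.2, Subtype.coe_eta] at h1
      exact Fin.ext (by omega)
    simp only [Sum.inr.injEq, Prod.mk.injEq, true_and, eq_self_iff_true]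
    exact ⟨Subtype.ext hg, Subtype.ext hh⟩

lemma Phi_surjective (hx : isMinimal O x) : Function.Surjective (Phi O O' x hx) := by
  rintro ⟨f, hf⟩
  have hN : Fintype.card (α ⊕ β) = Fintype.card α + Fintype.card β := Fintype.card_sum
  have hm := card_del (α := α) x
  have finj : ∀ u v : α ⊕ β, f u = f v → u = v := fun u v e => f.injective e
  have L1 : ∀ (q : β) (a : α), a ≠ x → (f (Sum.inr q)).val < (f (Sum.inl a)).val := by
    intro q a ha
    have hle : ¬ O.le a x := fun h => ha (hx a h)
    have h2 := hf (Sum.inr q) (Sum.inl a) hle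
    rw [Fin.le_def] at h2
    have h3 : (f (Sum.inr q)).val ≠ (f (Sum.inl a)).val := by
      intro e
      have := finj _ _ (Fin.ext e)
      simp at this
    omega
  by_cases hA : ∀ q : β, (f (Sum.inr q)).val < (f (Sum.inl x)).val
  · -- case A: x above all of Q
    have hall : ∀ (q : β) (a : α), (f (Sum.inr q)).val < (f (Sum.inl a)).val := by
      intro q a
      by_cases ha : a = x
      · rw [ha]; exact hA q
      · exact L1 q a ha
    have hinl : Function.Injective (fun a : α => f (Sum.inl a)) := by
      intro a a' e
      have := finj _ _ e; simpa using this
    have hinr : Function.Injective (fun q : β => f (Sum.inr q)) := by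
      intro q q' e
      have := finj _ _ e; simpa using this
    have hub : ∀ q : β, (f (Sum.inr q)).val < Fintype.card β := by
      intro q
      have hcard := fin_card_le_of_ge (fun a : α => f (Sum.inl a)) hinl
        (c := (f (Sum.inr q)).val + 1) (fun a => hall q a)
      have := (f (Sum.inr q)).isLt
      omega
    have hlb : ∀ a : α, Fintype.card β ≤ (f (Sum.inl a)).val := by
      intro a
      exact fin_card_le_of_lt (fun q : β => f (Sum.inr q)) hinr (fun q => hall q a)
    have gbij : Function.Bijective
        (fun q : β => (⟨(f (Sum.inr q)).val, hub q⟩ : Fin (Fintype.card β))) := by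
      rw [Fintype.bijective_iff_injective_and_card]
      refine ⟨?_, by simp⟩
      intro q q' e
      have h1 : (f (Sum.inr q)).val = (f (Sum.inr q')).val := by simpa using e
      have := finj _ _ (Fin.ext h1); simpa using this
    have hub2 : ∀ a : α, (f (Sum.inl a)).val - Fintype.card β < Fintype.card α := by
      intro a; have := (f (Sum.inl a)).isLt; omega
    have hbij : Function.Bijective
        (fun a : α =>
          (⟨(f (Sum.inl a)).val - Fintype.card β, hub2 a⟩ : Fin (Fintype.card α))) := by
      rw [Fintype.bijective_iff_injective_and_card]
      refine ⟨?_, by simp⟩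
      intro a a' e
      have h1 : (f (Sum.inl a)).val - Fintype.card β
          = (f (Sum.inl a')).val - Fintype.card β := by simpa using e
      have h2 := hlb a; have h3 := hlb a'
      have := finj _ _ (Fin.ext (show (f (Sum.inl a)).val = (f (Sum.inl a')).val by omega))
      simpa using this
    refine ⟨.inl (⟨Equiv.ofBijective _ gbij, ?_⟩, ⟨Equiv.ofBijective _ hbij, ?_⟩), ?_⟩
    · intro b b' hb
      have h2 := hf (Sum.inr b) (Sum.inr b') hb
      rw [Fin.le_def] at h2
      simp only [Equiv.ofBijective_apply]
      rw [Fin.mk_le_mk]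
      omega
    · intro a a' haa
      have h2 := hf (Sum.inl a) (Sum.inl a') haa
      rw [Fin.le_def] at h2
      simp only [Equiv.ofBijective_apply]
      rw [Fin.mk_le_mk]
      omega
    · refine Subtype.ext (Equiv.ext fun u => Fin.ext ?_)
      show (base1 _ _ u).val = (f u).val
      rcases u with a | q
      · rw [base1_inl]
        simp only [Equiv.ofBijective_apply]
        have := hlb a
        omega
      · rw [base1_inr]; exact rfl
  · -- case B: x below some element of Q
    push_neg at hA
    obtain ⟨q0, hq0⟩ := hA
    have hxq : ∀ q : β, (f (Sum.inr q)).val ≠ (f (Sum.inl x)).val := by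
      intro q e
      have := finj _ _ (Fin.ext e); simp at this
    have hq0' : (f (Sum.inl x)).val < (f (Sum.inr q0)).val := by
      have := hxq q0; omega
    have C1 : ∀ s : {a : α // a ≠ x}, (f (Sum.inl x)).val < (f (Sum.inl s.1)).val :=
      fun s => lt_trans hq0' (L1 q0 s.1 s.2)
    have hinS : Function.Injective (fun s : {a : α // a ≠ x} => f (Sum.inl s.1)) := by
      intro s t e
      have := finj _ _ e
      exact Subtype.ext (by simpa using this)
    have B1 : ∀ s : {a : α // a ≠ x}, Fintype.card β + 1 ≤ (f (Sum.inl s.1)).val := by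
      intro s
      have hcard := fin_card_le_of_lt (γ := β ⊕ PUnit.{1})
        (fun u => Sum.elim (fun q => f (Sum.inr q)) (fun _ => f (Sum.inl x)) u)
        (by
          rintro (q | u) (q' | u') e <;> simp only [Sum.elim_inl, Sum.elim_inr] at e
          · have := finj _ _ e; simpa using this
          · exact absurd (congrArg Fin.val e) (hxq q)
          · exact absurd (congrArg Fin.val e.symm) (hxq q')
          · exact congrArg Sum.inr (Subsingleton.elim _ _))
        (by
          rintro (q | u) <;> simp only [Sum.elim_inl, Sum.elim_inr]
          · exact L1 q s.1 s.2
          · exact C1 s)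
      simpa [Fintype.card_sum] using hcard
    have B2 : ∀ q : β, (f (Sum.inr q)).val ≤ Fintype.card β := by
      intro q
      have hcard := fin_card_le_of_ge (fun s : {a : α // a ≠ x} => f (Sum.inl s.1)) hinS
        (c := (f (Sum.inr q)).val + 1) (fun s => L1 q s.1 s.2)
      have := (f (Sum.inr q)).isLt
      omega
    have B2x : (f (Sum.inl x)).val < Fintype.card β := by
      have := B2 q0; omega
    have gprop : ∀ q : β,
        (if (f (Sum.inr q)).val < (f (Sum.inl x)).val then (f (Sum.inr q)).val
          else (f (Sum.inr q)).val - 1) < Fintype.card β := by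
      intro q
      have := B2 q; have := hxq q; have := B2x
      split <;> omega
    have gbij : Function.Bijective (fun q : β =>
        (⟨if (f (Sum.inr q)).val < (f (Sum.inl x)).val then (f (Sum.inr q)).val
          else (f (Sum.inr q)).val - 1, gprop q⟩ : Fin (Fintype.card β))) := by
      rw [Fintype.bijective_iff_injective_and_card]
      refine ⟨?_, by simp⟩
      intro q q' e
      have h1 : (if (f (Sum.inr q)).val < (f (Sum.inl x)).val then (f (Sum.inr q)).val
          else (f (Sum.inr q)).val - 1)
          = (if (f (Sum.inr q')).val < (f (Sum.inl x)).val then (f (Sum.inr q')).val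
          else (f (Sum.inr q')).val - 1) := by simpa using e
      have h2 := hxq q; have h3 := hxq q'
      have hv : (f (Sum.inr q)).val = (f (Sum.inr q')).val := by
        split_ifs at h1 <;> omega
      have := finj _ _ (Fin.ext hv); simpa using this
    have hprop : ∀ s : {a : α // a ≠ x},
        (f (Sum.inl s.1)).val - (Fintype.card β + 1) < Fintype.card {a : α // a ≠ x} := by
      intro s
      have := B1 s; have := (f (Sum.inl s.1)).isLt
      omega
    have hbij : Function.Bijective (fun s : {a : α // a ≠ x} =>
        (⟨(f (Sum.inl s.1)).val - (Fintype.card β + 1), hprop s⟩ :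
          Fin (Fintype.card {a : α // a ≠ x}))) := by
      rw [Fintype.bijective_iff_injective_and_card]
      refine ⟨?_, by simp⟩
      intro s t e
      have h1 : (f (Sum.inl s.1)).val - (Fintype.card β + 1)
          = (f (Sum.inl t.1)).val - (Fintype.card β + 1) := by simpa using e
      have h2 := B1 s; have h3 := B1 t
      have := finj _ _ (Fin.ext
        (show (f (Sum.inl s.1)).val = (f (Sum.inl t.1)).val by omega))
      exact Subtype.ext (by simpa using this)
    refine ⟨.inr (⟨(f (Sum.inl x)).val, B2x⟩,
      ⟨Equiv.ofBijective _ gbij, ?_⟩, ⟨Equiv.ofBijective _ hbij, ?_⟩), ?_⟩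
    · intro b b' hb
      have h2 := hf (Sum.inr b) (Sum.inr b') hb
      rw [Fin.le_def] at h2
      simp only [Equiv.ofBijective_apply]
      rw [Fin.mk_le_mk]
      have := hxq b; have := hxq b'
      split_ifs <;> omega
    · intro s t hst
      have h2 := hf (Sum.inl s.1) (Sum.inl t.1) hst
      rw [Fin.le_def] at h2
      simp only [Equiv.ofBijective_apply]
      rw [Fin.mk_le_mk]
      omega
    · refine Subtype.ext (Equiv.ext fun u => Fin.ext ?_)
      show (base2 x _ _ _ u).val = (f u).val
      rcases u with a | q
      · by_cases ha : a = x
        · rw [ha, base2_inl_x]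
        · rw [base2_inl_ne _ _ _ _ _ ha]
          simp only [Equiv.ofBijective_apply]
          have hB : Fintype.card β + 1 ≤ (f (Sum.inl a)).val := B1 ⟨a, ha⟩
          show Fintype.card β + 1 + ((f (Sum.inl a)).val - (Fintype.card β + 1))
            = (f (Sum.inl a)).val
          omega
      · rw [base2_inr, succAbove_val]
        simp only [Equiv.ofBijective_apply, Fin.coe_castSucc]
        have h1 := hxq q
        have h2 := B2 q
        split_ifs <;> omega

end LHS


/-- For the hybrid sum `R = Q <_x P` (with `x` minimal in `P`),
`e(R) = e(Q)·e(P) + n'·e(Q)·e(P−x)` where `n' = |Q|`. -/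
theorem linext_hybrid_sum (α β : Type) [Fintype α] [Fintype β] [DecidableEq α]
    (O : PartialOrder α) (O' : PartialOrder β) (x : α) (hx : isMinimal O x) :
    eCount (α ⊕ β) (hybOrder O O' x) =
      eCount β O' * eCount α O + Fintype.card β * (eCount β O' * eDel α O x) := by
  classical
  have e := Equiv.ofBijective (LHS.Phi O O' x hx)
    ⟨LHS.Phi_injective O O' x hx, LHS.Phi_surjective O O' x hx⟩
  calc eCount (α ⊕ β) (hybOrder O O' x)
      = Nat.card (LHS.LinExt (α ⊕ β) (hybOrder O O' x)) := rfl
    _ = Nat.card ((LHS.LinExt β O' × LHS.LinExt α O) ⊕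
        (Fin (Fintype.card β) ×
          (LHS.LinExt β O' × LHS.LinExt {a : α // a ≠ x} (delOrder O x)))) :=
        (Nat.card_congr e).symm
    _ = eCount β O' * eCount α O + Fintype.card β * (eCount β O' * eDel α O x) := by
        rw [Nat.card_sum, Nat.card_prod, Nat.card_prod, Nat.card_prod,
          Nat.card_eq_fintype_card (α := Fin (Fintype.card β)), Fintype.card_fin]
        rfl
end

section
/- Let P be a finite poset, x a minimal element of P, Q a finite poset with n' elements, and y a minimal element of Q. In the hybrid sum R = Q <_x P (every element of Q is below every element of P except x), the element y is minimal in R and e(R − y) = e(Q − y)·e(P) + (n'−1)·e(Q − y)·e(P − x). -/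
section HybridAux

/-- Linear extensions as a type. -/
abbrev LinE (γ : Type) [Fintype γ] (Oγ : PartialOrder γ) : Type :=
  {f : γ ≃ Fin (Fintype.card γ) // ∀ a b : γ, Oγ.le a b → f a ≤ f b}

lemma val_ne_of_ne {N : ℕ} {a b : Fin N} (h : a ≠ b) : a.1 ≠ b.1 :=
  fun hv => h (Fin.ext hv)

lemma lowBlock {N : ℕ} (s : Finset (Fin N)) (hs : ∀ a ∈ s, ∀ b ∉ s, a < b) :
    (∀ a ∈ s, a.1 < s.card) ∧ ∀ b ∉ s, s.card ≤ b.1 := by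
  constructor
  · intro a ha
    have h1 : Finset.Iic a ⊆ s := by
      intro v hv
      by_contra hvs
      exact absurd (Finset.mem_Iic.1 hv) (not_le.2 (hs a ha v hvs))
    have h2 := Finset.card_le_card h1
    rw [Fin.card_Iic] at h2
    omega
  · intro b hb
    have h1 : s ⊆ Finset.Iio b := fun v hv => Finset.mem_Iio.2 (hs v hv b hb)
    have h2 := Finset.card_le_card h1
    rwa [Fin.card_Iio] at h2

lemma eCount_congr {α β : Type} [Fintype α] [Fintype β] (O : PartialOrder α)
    (O' : PartialOrder β) (e : α ≃ β)
    (he : ∀ a b, O.le a b ↔ O'.le (e a) (e b)) : eCount α O = eCount β O' := by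
  have hc : Fintype.card α = Fintype.card β := Fintype.card_congr e
  apply Nat.card_congr
  refine Equiv.subtypeEquiv (e.equivCongr (finCongr hc)) ?_
  intro f
  constructor
  · intro h a b hab
    simp only [Equiv.equivCongr_apply_apply]
    rw [Fin.le_def]
    simp only [finCongr_apply, Fin.coe_cast]
    rw [← Fin.le_def]
    refine h _ _ ?_
    rw [he]
    simpa using hab
  · intro h a b hab
    have h2 := h (e a) (e b) ((he a b).1 hab)
    simp only [Equiv.equivCongr_apply_apply, Equiv.symm_apply_apply] at h2
    rw [Fin.le_def] at h2 ⊢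
    simpa using h2

/-- Removing `y` from a sum on the right. -/
def delSumEquiv {α β : Type} (y : β) :
    {s : α ⊕ β // s ≠ Sum.inr y} ≃ α ⊕ {b : β // b ≠ y} where
  toFun s := match s with
    | ⟨.inl a, _⟩ => .inl a
    | ⟨.inr b, h⟩ => .inr ⟨b, fun hb => h (by rw [hb])⟩
  invFun s := match s with
    | .inl a => ⟨.inl a, fun h => Sum.inl_ne_inr h⟩
    | .inr b => ⟨.inr b.1, fun h => b.2 (Sum.inr.inj h)⟩
  left_inv := by rintro ⟨(a | b), h⟩ <;> rfl
  right_inv := by rintro (a | b) <;> rfl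

lemma card_ne {α : Type} [Fintype α] [DecidableEq α] (x : α) :
    Fintype.card {a : α // a ≠ x} = Fintype.card α - 1 := by
  have h := Fintype.card_subtype_compl (fun a : α => a = x)
  simpa [Fintype.card_subtype_eq] using h

section Hyb

variable {α τ : Type} [Fintype α] [Fintype τ] [DecidableEq α]

abbrev hybS (O : PartialOrder α) (O₂ : PartialOrder τ) (x : α) : Type :=
  LinE (α ⊕ τ) (hybOrder O O₂ x)

abbrev hybT (O : PartialOrder α) (O₂ : PartialOrder τ) (x : α) : Type :=
  (LinE τ O₂ × LinE α O) ⊕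
    (Fin (Fintype.card τ) × LinE τ O₂ × LinE {a : α // a ≠ x} (delOrder O x))

/-- backward map, case A -/
def psiAfun (O : PartialOrder α) (O₂ : PartialOrder τ) (x : α)
    (g : LinE τ O₂) (h : LinE α O) :
    (α ⊕ τ) → Fin (Fintype.card (α ⊕ τ))
  | .inl a => ⟨Fintype.card τ + (h.1 a).1, by
      have h1 := (h.1 a).2
      rw [Fintype.card_sum]; omega⟩
  | .inr t => ⟨(g.1 t).1, by
      have h1 := (g.1 t).2
      have h2 : 0 < Fintype.card α := Fintype.card_pos_iff.mpr ⟨x⟩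
      rw [Fintype.card_sum]; omega⟩

lemma psiAfun_inj (O : PartialOrder α) (O₂ : PartialOrder τ) (x : α)
    (g : LinE τ O₂) (h : LinE α O) :
    Function.Injective (psiAfun O O₂ x g h) := by
  rintro (a | t) (a' | t') hst <;>
    simp only [psiAfun, Fin.mk.injEq] at hst
  · have h1 : h.1 a = h.1 a' := Fin.ext (by omega)
    rw [h.1.injective h1]
  · have h1 := (g.1 t').2
    omega
  · have h1 := (g.1 t).2
    omega
  · have h1 : g.1 t = g.1 t' := Fin.ext hst
    rw [g.1.injective h1]

noncomputable def psiA (O : PartialOrder α) (O₂ : PartialOrder τ) (x : α)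
    (g : LinE τ O₂) (h : LinE α O) : hybS O O₂ x := by
  refine ⟨Equiv.ofBijective (psiAfun O O₂ x g h)
    ((Fintype.bijective_iff_injective_and_card _).2
      ⟨psiAfun_inj O O₂ x g h, by simp⟩), ?_⟩
  rintro (a | t) (a' | t') hst
  · have h1 := h.2 a a' hst
    rw [Fin.le_def] at h1 ⊢
    show Fintype.card τ + (h.1 a).1 ≤ Fintype.card τ + (h.1 a').1
    omega
  · exact hst.elim
  · show (g.1 t).1 ≤ Fintype.card τ + (h.1 a').1
    have h1 := (g.1 t).2
    omega
  · have h1 := g.2 t t' hst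
    rw [Fin.le_def] at h1
    show (g.1 t).1 ≤ (g.1 t').1
    exact h1

/-- backward map, case B -/
def psiBfun (O : PartialOrder α) (O₂ : PartialOrder τ) (x : α)
    (j : Fin (Fintype.card τ)) (g : LinE τ O₂)
    (h : LinE {a : α // a ≠ x} (delOrder O x)) :
    (α ⊕ τ) → Fin (Fintype.card (α ⊕ τ))
  | .inl a =>
      if ha : a = x then ⟨j.1, by
        have h1 := j.2
        have h2 : 0 < Fintype.card α := Fintype.card_pos_iff.mpr ⟨x⟩
        rw [Fintype.card_sum]; omega⟩
      else ⟨Fintype.card τ + 1 + (h.1 ⟨a, ha⟩).1, by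
        have h1 := (h.1 ⟨a, ha⟩).2
        have hcn := card_ne x
        rw [Fintype.card_sum]; omega⟩
  | .inr t => ⟨if (g.1 t).1 < j.1 then (g.1 t).1 else (g.1 t).1 + 1, by
      have h1 := (g.1 t).2
      have h2 : 0 < Fintype.card α := Fintype.card_pos_iff.mpr ⟨x⟩
      rw [Fintype.card_sum]
      split <;> omega⟩

lemma psiBfun_inj (O : PartialOrder α) (O₂ : PartialOrder τ) (x : α)
    (j : Fin (Fintype.card τ)) (g : LinE τ O₂)
    (h : LinE {a : α // a ≠ x} (delOrder O x)) :
    Function.Injective (psiBfun O O₂ x j g h) := by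
  have hj := j.2
  rintro (a | t) (a' | t') hst
  · by_cases ha : a = x <;> by_cases ha' : a' = x <;>
      simp only [psiBfun, ha, ha', dite_true, dite_false, Fin.mk.injEq] at hst
    · rw [ha, ha']
    · have h1 := (h.1 ⟨a', ha'⟩).2
      omega
    · have h1 := (h.1 ⟨a, ha⟩).2
      omega
    · have h1 : h.1 ⟨a, ha⟩ = h.1 ⟨a', ha'⟩ := Fin.ext (by omega)
      have h2 := h.1.injective h1
      rw [Subtype.mk.injEq] at h2
      rw [h2]
  · by_cases ha : a = x <;>
      simp only [psiBfun, ha, dite_true, dite_false, Fin.mk.injEq] at hst <;>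
      · have h1 := (g.1 t').2
        split at hst <;> omega
  · by_cases ha' : a' = x <;>
      simp only [psiBfun, ha', dite_true, dite_false, Fin.mk.injEq] at hst <;>
      · have h1 := (g.1 t).2
        split at hst <;> omega
  · simp only [psiBfun, Fin.mk.injEq] at hst
    have h1 : g.1 t = g.1 t' := Fin.ext (by split at hst <;> split at hst <;> omega)
    rw [g.1.injective h1]

noncomputable def psiB (O : PartialOrder α) (O₂ : PartialOrder τ) (x : α)
    (hx : isMinimal O x) (j : Fin (Fintype.card τ)) (g : LinE τ O₂)
    (h : LinE {a : α // a ≠ x} (delOrder O x)) : hybS O O₂ x := by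
  refine ⟨Equiv.ofBijective (psiBfun O O₂ x j g h)
    ((Fintype.bijective_iff_injective_and_card _).2
      ⟨psiBfun_inj O O₂ x j g h, by simp⟩), ?_⟩
  have hj := j.2
  rintro (a | t) (a' | t') hst
  · show psiBfun O O₂ x j g h (.inl a) ≤ psiBfun O O₂ x j g h (.inl a')
    by_cases ha : a = x <;> by_cases ha' : a' = x <;>
      simp only [psiBfun, ha, ha', dite_true, dite_false, Fin.mk_le_mk]
    · exact le_refl _
    · omega
    · exfalso
      have hst2 : O.le a a' := hst
      rw [ha'] at hst2
      exact ha (hx a hst2)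
    · have h1 := h.2 ⟨a, ha⟩ ⟨a', ha'⟩ hst
      rw [Fin.le_def] at h1
      omega
  · exact hst.elim
  · show psiBfun O O₂ x j g h (.inr t) ≤ psiBfun O O₂ x j g h (.inl a')
    by_cases ha' : a' = x
    · exact absurd (ha' ▸ O.le_refl x) hst
    · simp only [psiBfun, ha', dite_false, Fin.mk_le_mk]
      have h1 := (g.1 t).2
      split <;> omega
  · show psiBfun O O₂ x j g h (.inr t) ≤ psiBfun O O₂ x j g h (.inr t')
    have h1 := g.2 t t' hst
    rw [Fin.le_def] at h1
    simp only [psiBfun, Fin.mk_le_mk]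
    split <;> split <;> omega

noncomputable def psi (O : PartialOrder α) (O₂ : PartialOrder τ) (x : α)
    (hx : isMinimal O x) : hybT O O₂ x → hybS O O₂ x
  | .inl (g, h) => psiA O O₂ x g h
  | .inr (j, g, h) => psiB O O₂ x hx j g h

lemma psiA_val (O : PartialOrder α) (O₂ : PartialOrder τ) (x : α)
    (g : LinE τ O₂) (h : LinE α O) (s : α ⊕ τ) :
    (psiA O O₂ x g h).1 s = psiAfun O O₂ x g h s := rfl

lemma psiB_val (O : PartialOrder α) (O₂ : PartialOrder τ) (x : α)
    (hx : isMinimal O x) (j : Fin (Fintype.card τ)) (g : LinE τ O₂)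
    (h : LinE {a : α // a ≠ x} (delOrder O x)) (s : α ⊕ τ) :
    (psiB O O₂ x hx j g h).1 s = psiBfun O O₂ x j g h s := rfl

lemma psiAfun_val_inl (O : PartialOrder α) (O₂ : PartialOrder τ) (x : α)
    (g : LinE τ O₂) (h : LinE α O) (a : α) :
    (psiAfun O O₂ x g h (Sum.inl a)).1 = Fintype.card τ + (h.1 a).1 := rfl

lemma psiAfun_val_inr (O : PartialOrder α) (O₂ : PartialOrder τ) (x : α)
    (g : LinE τ O₂) (h : LinE α O) (t : τ) :
    (psiAfun O O₂ x g h (Sum.inr t)).1 = (g.1 t).1 := rfl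

lemma psiBfun_val_inlx (O : PartialOrder α) (O₂ : PartialOrder τ) (x : α)
    (j : Fin (Fintype.card τ)) (g : LinE τ O₂)
    (h : LinE {a : α // a ≠ x} (delOrder O x)) :
    (psiBfun O O₂ x j g h (Sum.inl x)).1 = j.1 := by
  simp [psiBfun]

lemma psiBfun_val_inl (O : PartialOrder α) (O₂ : PartialOrder τ) (x : α)
    (j : Fin (Fintype.card τ)) (g : LinE τ O₂)
    (h : LinE {a : α // a ≠ x} (delOrder O x)) {a : α} (ha : a ≠ x) :
    (psiBfun O O₂ x j g h (Sum.inl a)).1 = Fintype.card τ + 1 + (h.1 ⟨a, ha⟩).1 := by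
  simp [psiBfun, ha]

lemma psiBfun_val_inr (O : PartialOrder α) (O₂ : PartialOrder τ) (x : α)
    (j : Fin (Fintype.card τ)) (g : LinE τ O₂)
    (h : LinE {a : α // a ≠ x} (delOrder O x)) (t : τ) :
    (psiBfun O O₂ x j g h (Sum.inr t)).1 =
      if (g.1 t).1 < j.1 then (g.1 t).1 else (g.1 t).1 + 1 := by
  simp [psiBfun]

lemma f_inj_val (O : PartialOrder α) (O₂ : PartialOrder τ) (x : α)
    (f : hybS O O₂ x) {s t : α ⊕ τ} (hne : s ≠ t) : (f.1 s).1 ≠ (f.1 t).1 :=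
  val_ne_of_ne (fun h => hne (f.1.injective h))

lemma blockA (O : PartialOrder α) (O₂ : PartialOrder τ) (x : α)
    (hx : isMinimal O x) (f : hybS O O₂ x)
    (hC : ∀ t : τ, (f.1 (Sum.inr t)).1 < (f.1 (Sum.inl x)).1) :
    (∀ t, (f.1 (Sum.inr t)).1 < Fintype.card τ) ∧
    ∀ a, Fintype.card τ ≤ (f.1 (Sum.inl a)).1 := by
  classical
  set s : Finset (Fin (Fintype.card (α ⊕ τ))) :=
    Finset.image (fun t => f.1 (Sum.inr t)) Finset.univ with hsdef
  have hinj : Function.Injective (fun t : τ => f.1 (Sum.inr t)) :=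
    fun t t' h => Sum.inr.inj (f.1.injective h)
  have hcard : s.card = Fintype.card τ := by
    rw [hsdef, Finset.card_image_of_injective _ hinj, Finset.card_univ]
  have hmem : ∀ t : τ, f.1 (Sum.inr t) ∈ s :=
    fun t => Finset.mem_image.2 ⟨t, Finset.mem_univ t, rfl⟩
  have hnotmem : ∀ a : α, f.1 (Sum.inl a) ∉ s := by
    intro a hmem'
    obtain ⟨t, -, ht⟩ := Finset.mem_image.1 hmem'
    exact Sum.inr_ne_inl (f.1.injective ht)
  have hs : ∀ a' ∈ s, ∀ b ∉ s, a' < b := by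
    intro a' ha' b hb
    obtain ⟨t, -, rfl⟩ := Finset.mem_image.1 ha'
    obtain ⟨s₀, rfl⟩ := f.1.surjective b
    match s₀ with
    | .inr t' => exact absurd (hmem t') hb
    | .inl a =>
      by_cases hax : a = x
      · rw [hax]
        exact Fin.lt_def.2 (hC t)
      · have h1 : (hybOrder O O₂ x).le (Sum.inr t) (Sum.inl a) :=
          fun hle => hax (hx a hle)
        have h2 := f.2 _ _ h1
        exact lt_of_le_of_ne h2 (fun h => Sum.inr_ne_inl (f.1.injective h))
  obtain ⟨h1, h2⟩ := lowBlock s hs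
  rw [hcard] at h1 h2
  exact ⟨fun t => h1 _ (hmem t), fun a => h2 _ (hnotmem a)⟩

lemma blockB (O : PartialOrder α) (O₂ : PartialOrder τ) (x : α)
    (hx : isMinimal O x) (f : hybS O O₂ x)
    (hC : ¬ ∀ t : τ, (f.1 (Sum.inr t)).1 < (f.1 (Sum.inl x)).1) :
    ((f.1 (Sum.inl x)).1 < Fintype.card τ) ∧
    (∀ t, (f.1 (Sum.inr t)).1 ≤ Fintype.card τ) ∧
    ∀ a, a ≠ x → Fintype.card τ + 1 ≤ (f.1 (Sum.inl a)).1 := by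
  classical
  push_neg at hC
  obtain ⟨t₀, ht₀⟩ := hC
  have ht₀' : (f.1 (Sum.inl x)).1 < (f.1 (Sum.inr t₀)).1 :=
    lt_of_le_of_ne ht₀ (f_inj_val O O₂ x f (by simp)).symm
  set s : Finset (Fin (Fintype.card (α ⊕ τ))) :=
    insert (f.1 (Sum.inl x)) (Finset.image (fun t => f.1 (Sum.inr t)) Finset.univ)
    with hsdef
  have hinj : Function.Injective (fun t : τ => f.1 (Sum.inr t)) :=
    fun t t' h => Sum.inr.inj (f.1.injective h)
  have hximg : f.1 (Sum.inl x) ∉ Finset.image (fun t => f.1 (Sum.inr t)) Finset.univ := by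
    intro hmem'
    obtain ⟨t, -, ht⟩ := Finset.mem_image.1 hmem'
    exact Sum.inr_ne_inl (f.1.injective ht)
  have hcard : s.card = Fintype.card τ + 1 := by
    rw [hsdef, Finset.card_insert_of_notMem hximg,
      Finset.card_image_of_injective _ hinj, Finset.card_univ]
  have hmem : ∀ t : τ, f.1 (Sum.inr t) ∈ s :=
    fun t => Finset.mem_insert_of_mem (Finset.mem_image.2 ⟨t, Finset.mem_univ t, rfl⟩)
  have hxmem : f.1 (Sum.inl x) ∈ s := Finset.mem_insert_self _ _
  have hnotmem : ∀ a : α, a ≠ x → f.1 (Sum.inl a) ∉ s := by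
    intro a ha hmem'
    rcases Finset.mem_insert.1 hmem' with h | h
    · exact ha (Sum.inl.inj (f.1.injective h))
    · obtain ⟨t, -, ht⟩ := Finset.mem_image.1 h
      exact Sum.inr_ne_inl (f.1.injective ht)
  have hs : ∀ a' ∈ s, ∀ b ∉ s, a' < b := by
    intro a' ha' b hb
    obtain ⟨s₀, rfl⟩ := f.1.surjective b
    have hbform : ∃ a : α, a ≠ x ∧ s₀ = Sum.inl a := by
      match s₀ with
      | .inr t' => exact absurd (hmem t') hb
      | .inl a =>
        refine ⟨a, fun hax => ?_, rfl⟩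
        rw [hax] at hb
        exact hb hxmem
    obtain ⟨a, hax, rfl⟩ := hbform
    have hta : ∀ t : τ, f.1 (Sum.inr t) < f.1 (Sum.inl a) := by
      intro t
      have h1 : (hybOrder O O₂ x).le (Sum.inr t) (Sum.inl a) :=
        fun hle => hax (hx a hle)
      exact lt_of_le_of_ne (f.2 _ _ h1) (fun h => Sum.inr_ne_inl (f.1.injective h))
    rcases Finset.mem_insert.1 ha' with h | h
    · rw [h]
      exact lt_trans (Fin.lt_def.2 ht₀') (hta t₀)
    · obtain ⟨t, -, rfl⟩ := Finset.mem_image.1 h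
      exact hta t
  obtain ⟨h1, h2⟩ := lowBlock s hs
  rw [hcard] at h1 h2
  refine ⟨?_, fun t => ?_, fun a ha => h2 _ (hnotmem a ha)⟩
  · have h3 := h1 _ (hmem t₀)
    omega
  · have h3 := h1 _ (hmem t)
    omega

noncomputable def phiAg (O : PartialOrder α) (O₂ : PartialOrder τ) (x : α)
    (f : hybS O O₂ x)
    (hb : ∀ t, (f.1 (Sum.inr t)).1 < Fintype.card τ) : LinE τ O₂ := by
  refine ⟨Equiv.ofBijective (fun t => (⟨(f.1 (Sum.inr t)).1, hb t⟩ : Fin (Fintype.card τ)))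
    ((Fintype.bijective_iff_injective_and_card _).2 ⟨?_, by simp⟩), ?_⟩
  · intro t t' h
    rw [Fin.mk.injEq] at h
    exact Sum.inr.inj (f.1.injective (Fin.ext h))
  · intro t t' h
    show (f.1 (Sum.inr t)).1 ≤ (f.1 (Sum.inr t')).1
    exact f.2 (Sum.inr t) (Sum.inr t') h

noncomputable def phiAh (O : PartialOrder α) (O₂ : PartialOrder τ) (x : α)
    (f : hybS O O₂ x)
    (hb : ∀ a, Fintype.card τ ≤ (f.1 (Sum.inl a)).1) : LinE α O := by
  have hN : Fintype.card (α ⊕ τ) = Fintype.card α + Fintype.card τ := Fintype.card_sum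
  refine ⟨Equiv.ofBijective
    (fun a => (⟨(f.1 (Sum.inl a)).1 - Fintype.card τ, by
      have h1 := (f.1 (Sum.inl a)).2
      have h2 := hb a
      omega⟩ : Fin (Fintype.card α)))
    ((Fintype.bijective_iff_injective_and_card _).2 ⟨?_, by simp⟩), ?_⟩
  · intro a a' h
    have h1 : (f.1 (Sum.inl a)).1 - Fintype.card τ =
        (f.1 (Sum.inl a')).1 - Fintype.card τ := congrArg Fin.val h
    have h2 := hb a
    have h3 := hb a'
    exact Sum.inl.inj (f.1.injective (Fin.ext (by omega)))
  · intro a a' h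
    have h1 := f.2 (Sum.inl a) (Sum.inl a') h
    rw [Fin.le_def] at h1
    show (f.1 (Sum.inl a)).1 - Fintype.card τ ≤ (f.1 (Sum.inl a')).1 - Fintype.card τ
    omega

noncomputable def phiBg (O : PartialOrder α) (O₂ : PartialOrder τ) (x : α)
    (f : hybS O O₂ x)
    (hbx : (f.1 (Sum.inl x)).1 < Fintype.card τ)
    (hb : ∀ t, (f.1 (Sum.inr t)).1 ≤ Fintype.card τ) : LinE τ O₂ := by
  have hne : ∀ t : τ, (f.1 (Sum.inr t)).1 ≠ (f.1 (Sum.inl x)).1 :=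
    fun t => f_inj_val O O₂ x f (by simp)
  refine ⟨Equiv.ofBijective
    (fun t => (⟨if (f.1 (Sum.inr t)).1 < (f.1 (Sum.inl x)).1 then (f.1 (Sum.inr t)).1
        else (f.1 (Sum.inr t)).1 - 1, by
      have h1 := hb t
      have h2 := hne t
      split <;> omega⟩ : Fin (Fintype.card τ)))
    ((Fintype.bijective_iff_injective_and_card _).2 ⟨?_, by simp⟩), ?_⟩
  · intro t t' h
    have h0 : (if (f.1 (Sum.inr t)).1 < (f.1 (Sum.inl x)).1 then (f.1 (Sum.inr t)).1
        else (f.1 (Sum.inr t)).1 - 1) =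
        (if (f.1 (Sum.inr t')).1 < (f.1 (Sum.inl x)).1 then (f.1 (Sum.inr t')).1
        else (f.1 (Sum.inr t')).1 - 1) := congrArg Fin.val h
    have h1 := hne t
    have h2 := hne t'
    refine Sum.inr.inj (f.1.injective (Fin.ext ?_))
    split at h0 <;> split at h0 <;> omega
  · intro t t' h
    have h1 := f.2 (Sum.inr t) (Sum.inr t') h
    rw [Fin.le_def] at h1
    have h2 := hne t
    have h3 := hne t'
    show (if (f.1 (Sum.inr t)).1 < (f.1 (Sum.inl x)).1 then (f.1 (Sum.inr t)).1
        else (f.1 (Sum.inr t)).1 - 1) ≤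
      (if (f.1 (Sum.inr t')).1 < (f.1 (Sum.inl x)).1 then (f.1 (Sum.inr t')).1
        else (f.1 (Sum.inr t')).1 - 1)
    split_ifs <;> omega

noncomputable def phiBh (O : PartialOrder α) (O₂ : PartialOrder τ) (x : α)
    (f : hybS O O₂ x)
    (hb : ∀ a, a ≠ x → Fintype.card τ + 1 ≤ (f.1 (Sum.inl a)).1) :
    LinE {a : α // a ≠ x} (delOrder O x) := by
  have hN : Fintype.card (α ⊕ τ) = Fintype.card α + Fintype.card τ := Fintype.card_sum
  have hcn := card_ne x
  refine ⟨Equiv.ofBijective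
    (fun a => (⟨(f.1 (Sum.inl a.1)).1 - (Fintype.card τ + 1), by
      have h1 := (f.1 (Sum.inl a.1)).2
      have h2 := hb a.1 a.2
      have h3 : 1 < Fintype.card α := Fintype.one_lt_card_iff_nontrivial.2 ⟨⟨a.1, x, a.2⟩⟩
      omega⟩ : Fin (Fintype.card {a : α // a ≠ x})))
    ((Fintype.bijective_iff_injective_and_card _).2 ⟨?_, by simp⟩), ?_⟩
  · intro a a' h
    have h1 : (f.1 (Sum.inl a.1)).1 - (Fintype.card τ + 1) =
        (f.1 (Sum.inl a'.1)).1 - (Fintype.card τ + 1) := congrArg Fin.val h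
    have h2 := hb a.1 a.2
    have h3 := hb a'.1 a'.2
    exact Subtype.ext (Sum.inl.inj (f.1.injective (Fin.ext (by omega))))
  · intro a a' h
    have h1 := f.2 (Sum.inl a.1) (Sum.inl a'.1) h
    rw [Fin.le_def] at h1
    have h2 := hb a.1 a.2
    show (f.1 (Sum.inl a.1)).1 - (Fintype.card τ + 1) ≤
      (f.1 (Sum.inl a'.1)).1 - (Fintype.card τ + 1)
    omega

lemma phiAg_val (O : PartialOrder α) (O₂ : PartialOrder τ) (x : α)
    (f : hybS O O₂ x) (hb : ∀ t, (f.1 (Sum.inr t)).1 < Fintype.card τ) (t : τ) :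
    ((phiAg O O₂ x f hb).1 t).1 = (f.1 (Sum.inr t)).1 := rfl

lemma phiAh_val (O : PartialOrder α) (O₂ : PartialOrder τ) (x : α)
    (f : hybS O O₂ x) (hb : ∀ a, Fintype.card τ ≤ (f.1 (Sum.inl a)).1) (a : α) :
    ((phiAh O O₂ x f hb).1 a).1 = (f.1 (Sum.inl a)).1 - Fintype.card τ := rfl

lemma phiBg_val (O : PartialOrder α) (O₂ : PartialOrder τ) (x : α)
    (f : hybS O O₂ x) (hbx : (f.1 (Sum.inl x)).1 < Fintype.card τ)
    (hb : ∀ t, (f.1 (Sum.inr t)).1 ≤ Fintype.card τ) (t : τ) :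
    ((phiBg O O₂ x f hbx hb).1 t).1 =
      if (f.1 (Sum.inr t)).1 < (f.1 (Sum.inl x)).1 then (f.1 (Sum.inr t)).1
      else (f.1 (Sum.inr t)).1 - 1 := rfl

lemma phiBh_val (O : PartialOrder α) (O₂ : PartialOrder τ) (x : α)
    (f : hybS O O₂ x)
    (hb : ∀ a, a ≠ x → Fintype.card τ + 1 ≤ (f.1 (Sum.inl a)).1)
    (a : {a : α // a ≠ x}) :
    ((phiBh O O₂ x f hb).1 a).1 = (f.1 (Sum.inl a.1)).1 - (Fintype.card τ + 1) := rfl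

noncomputable def phi (O : PartialOrder α) (O₂ : PartialOrder τ) (x : α)
    (hx : isMinimal O x) (f : hybS O O₂ x) : hybT O O₂ x :=
  if hC : ∀ t : τ, (f.1 (Sum.inr t)).1 < (f.1 (Sum.inl x)).1 then
    .inl (phiAg O O₂ x f (blockA O O₂ x hx f hC).1,
          phiAh O O₂ x f (blockA O O₂ x hx f hC).2)
  else
    .inr (⟨(f.1 (Sum.inl x)).1, (blockB O O₂ x hx f hC).1⟩,
          phiBg O O₂ x f (blockB O O₂ x hx f hC).1 (blockB O O₂ x hx f hC).2.1,
          phiBh O O₂ x f (blockB O O₂ x hx f hC).2.2)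

lemma psi_phi (O : PartialOrder α) (O₂ : PartialOrder τ) (x : α)
    (hx : isMinimal O x) (f : hybS O O₂ x) :
    psi O O₂ x hx (phi O O₂ x hx f) = f := by
  by_cases hC : ∀ t : τ, (f.1 (Sum.inr t)).1 < (f.1 (Sum.inl x)).1
  · rw [phi, dif_pos hC]
    simp only [psi]
    apply Subtype.ext
    apply Equiv.ext
    rintro (a | t) <;> apply Fin.ext
    · rw [psiA_val, psiAfun_val_inl]
      show Fintype.card τ + ((f.1 (Sum.inl a)).1 - Fintype.card τ) = (f.1 (Sum.inl a)).1
      have h3 := (blockA O O₂ x hx f hC).2 a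
      omega
    · rw [psiA_val, psiAfun_val_inr, phiAg_val]
  · rw [phi, dif_neg hC]
    simp only [psi]
    apply Subtype.ext
    apply Equiv.ext
    rintro (a | t) <;> apply Fin.ext
    · rw [psiB_val]
      by_cases ha : a = x
      · subst ha
        rw [psiBfun_val_inlx]
      · rw [psiBfun_val_inl O O₂ x _ _ _ ha]
        show Fintype.card τ + 1 + ((f.1 (Sum.inl a)).1 - (Fintype.card τ + 1)) =
          (f.1 (Sum.inl a)).1
        have h3 := (blockB O O₂ x hx f hC).2.2 a ha
        omega
    · rw [psiB_val, psiBfun_val_inr]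
      show (if (if (f.1 (Sum.inr t)).1 < (f.1 (Sum.inl x)).1 then (f.1 (Sum.inr t)).1
          else (f.1 (Sum.inr t)).1 - 1) < (f.1 (Sum.inl x)).1 then
          (if (f.1 (Sum.inr t)).1 < (f.1 (Sum.inl x)).1 then (f.1 (Sum.inr t)).1
          else (f.1 (Sum.inr t)).1 - 1)
          else (if (f.1 (Sum.inr t)).1 < (f.1 (Sum.inl x)).1 then (f.1 (Sum.inr t)).1
          else (f.1 (Sum.inr t)).1 - 1) + 1) = (f.1 (Sum.inr t)).1
      have h1 : (f.1 (Sum.inr t)).1 ≠ (f.1 (Sum.inl x)).1 :=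
        f_inj_val O O₂ x f (by simp)
      have h2 := (blockB O O₂ x hx f hC).2.1 t
      split_ifs <;> omega

lemma phi_psi (O : PartialOrder α) (O₂ : PartialOrder τ) (x : α)
    (hx : isMinimal O x) (tt : hybT O O₂ x) :
    phi O O₂ x hx (psi O O₂ x hx tt) = tt := by
  obtain (⟨g, h⟩ | ⟨j, g, h⟩) := tt
  · simp only [psi]
    have hC : ∀ t : τ, ((psiA O O₂ x g h).1 (Sum.inr t)).1 <
        ((psiA O O₂ x g h).1 (Sum.inl x)).1 := by
      intro t
      rw [psiA_val, psiA_val, psiAfun_val_inr, psiAfun_val_inl]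
      have h1 := (g.1 t).2
      omega
    have e1 : phiAg O O₂ x (psiA O O₂ x g h)
        (blockA O O₂ x hx (psiA O O₂ x g h) hC).1 = g := by
      apply Subtype.ext
      apply Equiv.ext
      intro t
      apply Fin.ext
      rw [phiAg_val, psiA_val, psiAfun_val_inr]
    have e2 : phiAh O O₂ x (psiA O O₂ x g h)
        (blockA O O₂ x hx (psiA O O₂ x g h) hC).2 = h := by
      apply Subtype.ext
      apply Equiv.ext
      intro a
      apply Fin.ext
      rw [phiAh_val, psiA_val, psiAfun_val_inl]
      omega
    rw [phi, dif_pos hC, e1, e2]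
  · simp only [psi]
    have hfx : ((psiB O O₂ x hx j g h).1 (Sum.inl x)).1 = j.1 := by
      rw [psiB_val, psiBfun_val_inlx]
    have hC : ¬ ∀ t : τ, ((psiB O O₂ x hx j g h).1 (Sum.inr t)).1 <
        ((psiB O O₂ x hx j g h).1 (Sum.inl x)).1 := by
      intro hC
      have h1 := hC (g.1.symm j)
      rw [hfx, psiB_val, psiBfun_val_inr, Equiv.apply_symm_apply] at h1
      split at h1 <;> omega
    have e0 : (⟨((psiB O O₂ x hx j g h).1 (Sum.inl x)).1,
        (blockB O O₂ x hx (psiB O O₂ x hx j g h) hC).1⟩ : Fin (Fintype.card τ)) = j :=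
      Fin.ext hfx
    have e1 : phiBg O O₂ x (psiB O O₂ x hx j g h)
        (blockB O O₂ x hx (psiB O O₂ x hx j g h) hC).1
        (blockB O O₂ x hx (psiB O O₂ x hx j g h) hC).2.1 = g := by
      apply Subtype.ext
      apply Equiv.ext
      intro t
      apply Fin.ext
      rw [phiBg_val, psiB_val, psiB_val, psiBfun_val_inr, psiBfun_val_inlx]
      have h1 := j.2
      have h2 := (g.1 t).2
      split_ifs <;> omega
    have e2 : phiBh O O₂ x (psiB O O₂ x hx j g h)
        (blockB O O₂ x hx (psiB O O₂ x hx j g h) hC).2.2 = h := by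
      apply Subtype.ext
      apply Equiv.ext
      intro a
      apply Fin.ext
      rw [phiBh_val, psiB_val, psiBfun_val_inl O O₂ x _ _ _ a.2]
      show Fintype.card τ + 1 + (h.1 a).1 - (Fintype.card τ + 1) = (h.1 a).1
      omega
    rw [phi, dif_neg hC, e0, e1, e2]

lemma hyb_count (O : PartialOrder α) (O₂ : PartialOrder τ) (x : α)
    (hx : isMinimal O x) :
    eCount (α ⊕ τ) (hybOrder O O₂ x) =
      eCount τ O₂ * eCount α O +
        Fintype.card τ * (eCount τ O₂ * eDel α O x) := by
  have key : Nat.card (hybS O O₂ x) = Nat.card (hybT O O₂ x) :=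
    Nat.card_congr ⟨phi O O₂ x hx, psi O O₂ x hx, psi_phi O O₂ x hx, phi_psi O O₂ x hx⟩
  have h1 : eCount (α ⊕ τ) (hybOrder O O₂ x) = Nat.card (hybS O O₂ x) := rfl
  rw [h1, key]
  show Nat.card ((LinE τ O₂ × LinE α O) ⊕
    (Fin (Fintype.card τ) × LinE τ O₂ × LinE {a : α // a ≠ x} (delOrder O x))) = _
  rw [Nat.card_sum, Nat.card_prod, Nat.card_prod, Nat.card_prod]
  have h2 : Nat.card (Fin (Fintype.card τ)) = Fintype.card τ := by
    rw [Nat.card_eq_fintype_card, Fintype.card_fin]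
  rw [h2]
  rfl

end Hyb

end HybridAux


/-- For the hybrid sum `R = Q <_x P` (with `x` minimal in `P` and `y` minimal
in `Q`), `y` is minimal in `R` and
`e(R − y) = e(Q − y)·e(P) + (n' − 1)·e(Q − y)·e(P − x)` where `n' = |Q|`. -/
theorem hybrid_sum_del_y (α β : Type) [Fintype α] [Fintype β]
    [DecidableEq α] [DecidableEq β]
    (O : PartialOrder α) (O' : PartialOrder β) (x : α) (hx : isMinimal O x)
    (y : β) (hy : isMinimal O' y) :
    isMinimal (hybOrder O O' x) (Sum.inr y) ∧
      eDel (α ⊕ β) (hybOrder O O' x) (Sum.inr y) =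
        eDel β O' y * eCount α O +
          (Fintype.card β - 1) * (eDel β O' y * eDel α O x) := by
  constructor
  · rintro (a | b) hs
    · exact hs.elim
    · exact congrArg Sum.inr (hy b hs)
  · have h1 : eDel (α ⊕ β) (hybOrder O O' x) (Sum.inr y) =
        eCount (α ⊕ {b : β // b ≠ y}) (hybOrder O (delOrder O' y) x) := by
      refine eCount_congr _ _ (delSumEquiv y) ?_
      rintro ⟨(a | b), ha⟩ ⟨(a' | b'), ha'⟩ <;> exact Iff.rfl
    rw [h1, hyb_count O (delOrder O' y) x hx, card_ne y]
    rfl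
end

section
/- Let P be a finite poset, x a minimal element of P, and Q a finite poset. Then the width of the hybrid sum Q <_x P is at most max{width(P) − 1, width(Q)} + 1. -/
lemma antichain_card_le_pwidth {γ : Type} [Fintype γ] (O : PartialOrder γ) (s : Finset γ)
    (h : ∀ a ∈ s, ∀ b ∈ s, a ≠ b → ¬ O.le a b) : s.card ≤ pwidth γ O :=
  le_csSup ⟨Fintype.card γ, fun n ⟨t, _, ht⟩ => ht ▸ t.card_le_univ⟩ ⟨s, h, rfl⟩

/-- The width of the hybrid sum `Q <_x P` (with `x` minimal in `P`) is at most
`max {width(P) − 1, width(Q)} + 1`. -/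
theorem hybrid_sum_width (α β : Type) [Fintype α] [Fintype β]
    (O : PartialOrder α) (O' : PartialOrder β) (x : α) (hx : isMinimal O x) :
    pwidth (α ⊕ β) (hybOrder O O' x) ≤ max (pwidth α O - 1) (pwidth β O') + 1 := by
  classical
  refine csSup_le ⟨0, ∅, by simp, rfl⟩ ?_
  rintro n ⟨s, hs, rfl⟩
  by_cases hR : ∃ b : β, Sum.inr b ∈ s
  · obtain ⟨b, hb⟩ := hR
    -- all left elements of s equal Sum.inl x
    have hSL : ∀ z ∈ s.filter (fun z => z.isLeft), z = Sum.inl x := by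
      intro z hz
      rw [Finset.mem_filter] at hz
      obtain ⟨hz1, hz2⟩ := hz
      match z, hz2 with
      | Sum.inl a, _ =>
        by_cases hax : a = x
        · rw [hax]
        · have h1 : ¬ ¬ O.le a x := hs _ hb _ hz1 (by simp)
          exact (hax (hx a (not_not.mp h1))).elim
    have hcardL : (s.filter (fun z => z.isLeft)).card ≤ 1 := by
      apply Finset.card_le_one.mpr
      intro a ha b hb'
      rw [hSL a ha, hSL b hb']
    -- right part is an antichain in O'
    set B : Finset β := (s.filter (fun z => ¬ z.isLeft)).preimage Sum.inr
      (Set.injOn_of_injective Sum.inr_injective) with hB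
    have hBcard : B.card = (s.filter (fun z => ¬ z.isLeft)).card := by
      rw [hB, Finset.card_preimage]
      congr 1
      apply Finset.filter_true_of_mem
      intro z hz
      rw [Finset.mem_filter] at hz
      match z, hz.2 with
      | Sum.inr b, _ => exact Set.mem_range_self b
    have hBanti : ∀ b1 ∈ B, ∀ b2 ∈ B, b1 ≠ b2 → ¬ O'.le b1 b2 := by
      intro b1 h1 b2 h2 hne
      rw [hB, Finset.mem_preimage, Finset.mem_filter] at h1 h2
      exact hs _ h1.1 _ h2.1 (by simpa using hne)
    have hQ : (s.filter (fun z => ¬ z.isLeft)).card ≤ pwidth β O' :=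
      hBcard ▸ antichain_card_le_pwidth O' B hBanti
    have := Finset.card_filter_add_card_filter_not (s := s)
      (p := fun z => z.isLeft)
    omega
  · -- all elements are left
    set A : Finset α := s.preimage Sum.inl (Set.injOn_of_injective Sum.inl_injective) with hA
    have hAcard : A.card = s.card := by
      rw [hA, Finset.card_preimage]
      congr 1
      apply Finset.filter_true_of_mem
      intro z hz
      match z with
      | Sum.inl a => exact Set.mem_range_self a
      | Sum.inr b => exact absurd ⟨b, hz⟩ hR
    have hAanti : ∀ a1 ∈ A, ∀ a2 ∈ A, a1 ≠ a2 → ¬ O.le a1 a2 := by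
      intro a1 h1 a2 h2 hne
      rw [hA, Finset.mem_preimage] at h1 h2
      exact hs _ h1 _ h2 (by simpa using hne)
    have hP : s.card ≤ pwidth α O := hAcard ▸ antichain_card_le_pwidth O A hAanti
    rcases Nat.eq_zero_or_pos s.card with h0 | h0
    · omega
    · have : 1 ≤ pwidth α O := le_trans h0 hP
      have : s.card ≤ max (pwidth α O - 1) (pwidth β O') + 1 := by omega
      exact this
end
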